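/- arXiv:1803.11094 — 2 statements merged into one kernel-verified Lean document; each statement's English description precedes it below -/
import Mathlib

section
/- Suppose ρ, φ, f : ℝ → ℝ satisfy the worldline flat-spacetime bound ∫ ρ(τ) f(τ)² dτ ≥ −∫ [((1−2ξ)/(n−2)) m² f(τ)² + 2ξ f'(τ)²] φ(τ)² dτ for every smooth compactly supported f, and |φ(τ)| ≤ φ_max for all τ. Fix a smooth compactly supported f with ∫ f² = 1 and set f_λ(τ) = f(τ/λ)/√λ. Then liminf_{λ→∞} ∫ ρ(τ) f_λ(τ)² dτ ≥ −((1−2ξ)/(n−2)) m² φ_max². -/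
open MeasureTheory Filter

set_option maxHeartbeats 1000000 in
/-- long-term average consequence of the worldline SEI in flat spacetime:
liminf_{λ→∞} ∫ ρ f_λ² ≥ −((1−2ξ)/(n−2)) m² φ_max². -/
theorem stmt_4 (n : ℕ) (hn : 3 ≤ n) (m ξ φmax : ℝ)
    (hm : 0 ≤ m) (hξ0 : 0 ≤ ξ) (hξ : ξ ≤ 1 / 2) (hφmax : 0 ≤ φmax)
    (ρ φ : ℝ → ℝ) (hρ : Continuous ρ) (hρint : LocallyIntegrable ρ)
    (hφ : Continuous φ) (hφb : ∀ τ, |φ τ| ≤ φmax)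
    (hbound : ∀ f : ℝ → ℝ, ContDiff ℝ (⊤ : ℕ∞) f → HasCompactSupport f →
      ∫ τ : ℝ, ρ τ * f τ ^ 2 ≥
        -∫ τ : ℝ, (((1 - 2 * ξ) / ((n : ℝ) - 2)) * m ^ 2 * f τ ^ 2
          + 2 * ξ * (deriv f τ) ^ 2) * φ τ ^ 2)
    (f : ℝ → ℝ) (hf : ContDiff ℝ (⊤ : ℕ∞) f) (hfc : HasCompactSupport f)
    (hnorm : ∫ τ : ℝ, f τ ^ 2 = 1) :
    liminf (fun lam : ℝ => ∫ τ : ℝ, ρ τ * (f (τ / lam) / Real.sqrt lam) ^ 2) atTop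
      ≥ -((1 - 2 * ξ) / ((n : ℝ) - 2)) * m ^ 2 * φmax ^ 2 := by
  have hn2 : (0:ℝ) < (n : ℝ) - 2 := by
    have : (3:ℝ) ≤ (n : ℝ) := by exact_mod_cast hn
    linarith
  set A : ℝ := (1 - 2 * ξ) / ((n : ℝ) - 2) * m ^ 2 with hA
  have hA0 : 0 ≤ A := mul_nonneg (div_nonneg (by linarith) hn2.le) (sq_nonneg m)
  set J : ℝ := ∫ τ : ℝ, (deriv f τ) ^ 2 with hJdef
  have hJ0 : 0 ≤ J := integral_nonneg fun τ => sq_nonneg _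
  set H : ℝ → ℝ := fun lam : ℝ => ∫ τ : ℝ, ρ τ * (f (τ / lam) / Real.sqrt lam) ^ 2 with hH
  set g : ℝ → ℝ := fun lam : ℝ => -((A + 2 * ξ * J / lam ^ 2) * φmax ^ 2) with hg
  -- the key pointwise-in-lam estimate
  have key : ∀ lam : ℝ, 1 ≤ lam → g lam ≤ H lam := by
    intro lam hlam
    have hl0 : (0:ℝ) < lam := lt_of_lt_of_le one_pos hlam
    set c : ℝ := Real.sqrt lam with hc
    have hc0 : 0 < c := Real.sqrt_pos.mpr hl0
    have hc2 : c ^ 2 = lam := Real.sq_sqrt hl0.le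
    set F : ℝ → ℝ := fun τ => f (τ / lam) / c with hF
    have hFsm : ContDiff ℝ (⊤ : ℕ∞) F := (hf.comp (contDiff_id.div_const lam)).div_const c
    have hFc : HasCompactSupport F := by
      have h0 : HasCompactSupport (fun τ => f (τ * lam⁻¹)) :=
        hfc.comp_homeomorph (Homeomorph.mulRight₀ lam⁻¹ (inv_ne_zero hl0.ne'))
      have := h0.comp_left (g := fun x => x / c) (by simp)
      simpa [hF, Function.comp_def, div_eq_mul_inv] using this
    have hFD : ∀ τ, deriv F τ = deriv f (τ / lam) * (1 / lam) / c := by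
      intro τ
      have h1 : HasDerivAt (fun x : ℝ => x / lam) (1 / lam) τ := (hasDerivAt_id τ).div_const lam
      have h2 : HasDerivAt (fun x : ℝ => f (x / lam)) (deriv f (τ / lam) * (1 / lam)) τ :=
        ((hf.differentiable (by simp) (τ / lam)).hasDerivAt).comp τ h1
      exact (h2.div_const _).deriv
    have hFcont : Continuous F := hFsm.continuous
    have hdFcont : Continuous (deriv F) := hFsm.continuous_deriv (by simp)
    have hdFc : HasCompactSupport (deriv F) := hFc.deriv
    -- ∫ F² = 1
    have hI1 : ∫ τ : ℝ, F τ ^ 2 = 1 := by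
      have e1 : (fun τ : ℝ => F τ ^ 2) = fun τ : ℝ => (fun x => f x ^ 2 / lam) (τ / lam) := by
        funext τ; simp [hF, div_pow, hc2]
      rw [e1, MeasureTheory.Measure.integral_comp_div (fun x => f x ^ 2 / lam) lam, integral_div, hnorm,
        abs_of_pos hl0, smul_eq_mul]
      field_simp
    -- ∫ (F')² = J / lam²
    have hI2 : ∫ τ : ℝ, (deriv F τ) ^ 2 = J / lam ^ 2 := by
      have e2 : (fun τ : ℝ => (deriv F τ) ^ 2)
          = fun τ : ℝ => (fun x => (deriv f x) ^ 2 / lam ^ 3) (τ / lam) := by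
        funext τ
        rw [hFD τ]
        rw [div_pow, hc2, mul_pow, div_pow, one_pow, mul_one_div, div_div, ← pow_succ]
      rw [e2, MeasureTheory.Measure.integral_comp_div (fun x => (deriv f x) ^ 2 / lam ^ 3) lam,
        integral_div, abs_of_pos hl0, smul_eq_mul, ← hJdef]
      field_simp
    -- integrability facts
    have hsF2 : HasCompactSupport (fun τ => F τ ^ 2) := by
      simpa [Function.comp_def] using hFc.comp_left (g := fun x : ℝ => x ^ 2) (by simp)
    have hsdF2 : HasCompactSupport (fun τ => (deriv F τ) ^ 2) := by
      simpa [Function.comp_def] using hdFc.comp_left (g := fun x : ℝ => x ^ 2) (by simp)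
    have intF2 : Integrable (fun τ : ℝ => F τ ^ 2) :=
      (hFcont.pow 2).integrable_of_hasCompactSupport hsF2
    have intdF2 : Integrable (fun τ : ℝ => (deriv F τ) ^ 2) :=
      (hdFcont.pow 2).integrable_of_hasCompactSupport hsdF2
    have hsum : HasCompactSupport (fun τ => A * F τ ^ 2 + 2 * ξ * (deriv F τ) ^ 2) := by
      have h1 : HasCompactSupport (fun τ => A * F τ ^ 2) := by
        simpa [Function.comp_def] using hsF2.comp_left (g := fun x : ℝ => A * x) (by simp)
      have h2 : HasCompactSupport (fun τ => 2 * ξ * (deriv F τ) ^ 2) := by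
        simpa [Function.comp_def] using hsdF2.comp_left (g := fun x : ℝ => 2 * ξ * x) (by simp)
      exact h1.add h2
    have hsumcont : Continuous (fun τ => A * F τ ^ 2 + 2 * ξ * (deriv F τ) ^ 2) :=
      (continuous_const.mul (hFcont.pow 2)).add (continuous_const.mul (hdFcont.pow 2))
    have int1 : Integrable (fun τ : ℝ => (A * F τ ^ 2 + 2 * ξ * (deriv F τ) ^ 2) * φ τ ^ 2) := by
      refine (hsumcont.mul (hφ.pow 2)).integrable_of_hasCompactSupport ?_
      exact hsum.mul_right
    have int2 : Integrable (fun τ : ℝ => (A * F τ ^ 2 + 2 * ξ * (deriv F τ) ^ 2) * φmax ^ 2) := by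
      refine (hsumcont.mul continuous_const).integrable_of_hasCompactSupport ?_
      exact hsum.mul_right
    -- monotone bound on the inner integral
    have hmono : ∫ τ : ℝ, (A * F τ ^ 2 + 2 * ξ * (deriv F τ) ^ 2) * φ τ ^ 2
        ≤ (A + 2 * ξ * J / lam ^ 2) * φmax ^ 2 := by
      have step1 : ∫ τ : ℝ, (A * F τ ^ 2 + 2 * ξ * (deriv F τ) ^ 2) * φ τ ^ 2
          ≤ ∫ τ : ℝ, (A * F τ ^ 2 + 2 * ξ * (deriv F τ) ^ 2) * φmax ^ 2 := by
        refine integral_mono int1 int2 fun τ => ?_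
        have h1 : 0 ≤ A * F τ ^ 2 + 2 * ξ * (deriv F τ) ^ 2 := by
          have := sq_nonneg (F τ); have := sq_nonneg (deriv F τ); positivity
        have h2 : φ τ ^ 2 ≤ φmax ^ 2 := by
          have h := abs_le.mp (hφb τ)
          exact sq_le_sq' h.1 h.2
        exact mul_le_mul_of_nonneg_left h2 h1
      have step2 : ∫ τ : ℝ, (A * F τ ^ 2 + 2 * ξ * (deriv F τ) ^ 2) * φmax ^ 2
          = (A + 2 * ξ * J / lam ^ 2) * φmax ^ 2 := by
        rw [integral_mul_const, integral_add (intF2.const_mul A) (intdF2.const_mul (2 * ξ)),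
          integral_const_mul, integral_const_mul, hI1, hI2]
        ring
      linarith
    -- apply the hypothesis
    have hb := hbound F hFsm hFc
    have : -( (A + 2 * ξ * J / lam ^ 2) * φmax ^ 2) ≤ ∫ τ : ℝ, ρ τ * F τ ^ 2 := by
      refine le_trans (neg_le_neg hmono) ?_
      exact hb
    simpa [hg, hH, hF, hc] using this
  -- limit of g
  have hgt : Tendsto g atTop (nhds (-(A * φmax ^ 2))) := by
    have h0 : Tendsto (fun lam : ℝ => (lam ^ 2)⁻¹) atTop (nhds 0) :=
      (tendsto_pow_atTop (two_ne_zero)).inv_tendsto_atTop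
    have h1 : Tendsto (fun lam : ℝ => 2 * ξ * J / lam ^ 2) atTop (nhds 0) := by
      simpa [div_eq_mul_inv] using h0.const_mul (2 * ξ * J)
    have h2 : Tendsto g atTop (nhds (-((A + 0) * φmax ^ 2))) :=
      (((tendsto_const_nhds.add h1).mul tendsto_const_nhds).neg)
    simpa using h2
  have hkey' : ∀ᶠ lam in (atTop : Filter ℝ), g lam ≤ H lam :=
    eventually_atTop.mpr ⟨1, key⟩
  have hgoal : -(A * φmax ^ 2) ≤ liminf H atTop := by
    by_cases hco : IsCoboundedUnder (· ≥ ·) (atTop : Filter ℝ) H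
    · calc -(A * φmax ^ 2) = liminf g atTop := (hgt.liminf_eq).symm
        _ ≤ liminf H atTop := liminf_le_liminf hkey' (hgt.isBoundedUnder_ge) hco
    · have hbdd : ¬ BddAbove {a : ℝ | ∀ᶠ lam in (atTop : Filter ℝ), a ≤ H lam} := by
        intro ⟨b, hb⟩
        exact hco ⟨b, fun a ha => hb (by simpa [eventually_map] using ha)⟩
      rw [liminf_eq, Real.sSup_of_not_bddAbove hbdd]
      nlinarith [sq_nonneg φmax]
  calc -((1 - 2 * ξ) / ((n : ℝ) - 2)) * m ^ 2 * φmax ^ 2 = -(A * φmax ^ 2) := by rw [hA]; ring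
    _ ≤ liminf H atTop := hgoal
end

section
/- Suppose ρ : ℝⁿ → ℝ is locally integrable and satisfies ∫ ρ f² dV ≥ −φ_max² ∫ [ c₁ |Δ(f²)| + c₂ |∇f|² ] dV for all smooth compactly supported f : ℝⁿ → ℝ, where c₁, c₂, φ_max ≥ 0 are constants. Then for any fixed smooth compactly supported f with ∫ f² dV = 1, liminf_{λ→∞} ∫ ρ f_λ² dV ≥ 0, where f_λ(x) = λ^{−n/2} f(x/λ). -/
open MeasureTheory Filter

/-- Euclidean Laplacian of a scalar function on ℝⁿ (sum of repeated directional
second derivatives along the standard orthonormal basis). -/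
noncomputable def lap {n : ℕ} (g : EuclideanSpace ℝ (Fin n) → ℝ)
    (x : EuclideanSpace ℝ (Fin n)) : ℝ :=
  ∑ i : Fin n, fderiv ℝ (fun y => fderiv ℝ g y (EuclideanSpace.single i 1)) x
    (EuclideanSpace.single i 1)

section Aux

variable {n : ℕ}

lemma my_fderiv_comp_smul (F : EuclideanSpace ℝ (Fin n) → ℝ) (c : ℝ)
    (x : EuclideanSpace ℝ (Fin n)) (hF : DifferentiableAt ℝ F (c • x)) :
    fderiv ℝ (fun y => F (c • y)) x = c • fderiv ℝ F (c • x) := by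
  have h1 : HasFDerivAt (fun y : EuclideanSpace ℝ (Fin n) => c • y)
      (c • ContinuousLinearMap.id ℝ (EuclideanSpace ℝ (Fin n))) x :=
    (hasFDerivAt_id x).const_smul c
  have h2 : HasFDerivAt (fun y => F (c • y))
      ((fderiv ℝ F (c • x)).comp (c • ContinuousLinearMap.id ℝ (EuclideanSpace ℝ (Fin n)))) x :=
    hF.hasFDerivAt.comp x h1
  have h3 : (fderiv ℝ F (c • x)).comp (c • ContinuousLinearMap.id ℝ (EuclideanSpace ℝ (Fin n)))
      = c • fderiv ℝ F (c • x) := by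
    ext v
    simp
  rw [← h3]
  exact h2.fderiv

lemma my_lap_const_mul (F : EuclideanSpace ℝ (Fin n) → ℝ) (hF : ContDiff ℝ (⊤ : ℕ∞) F) (a : ℝ)
    (x : EuclideanSpace ℝ (Fin n)) :
    lap (fun y => a * F y) x = a * lap F x := by
  have hFd : Differentiable ℝ F := hF.differentiable (by simp)
  have hF' : ContDiff ℝ (⊤ : ℕ∞) (fun y => fderiv ℝ F y) := hF.fderiv_right (by simp)
  unfold lap
  rw [Finset.mul_sum]
  refine Finset.sum_congr rfl fun i _ => ?_
  set e := EuclideanSpace.single i (1:ℝ) with he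
  have hG : Differentiable ℝ (fun z => fderiv ℝ F z e) :=
    (hF'.differentiable (by simp)).clm_apply (differentiable_const e)
  have hinner : (fun y => fderiv ℝ (fun z => a * F z) y e)
      = fun y => a * fderiv ℝ F y e := by
    funext y
    rw [fderiv_const_mul (hFd y) a]
    simp
  rw [hinner, fderiv_const_mul (hG x) a]
  simp [mul_assoc]

lemma my_lap_comp_smul (F : EuclideanSpace ℝ (Fin n) → ℝ) (hF : ContDiff ℝ (⊤ : ℕ∞) F) (c : ℝ)
    (x : EuclideanSpace ℝ (Fin n)) :
    lap (fun y => F (c • y)) x = c ^ 2 * lap F (c • x) := by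
  have hFd : Differentiable ℝ F := hF.differentiable (by simp)
  have hF' : ContDiff ℝ (⊤ : ℕ∞) (fun y => fderiv ℝ F y) := hF.fderiv_right (by simp)
  unfold lap
  rw [Finset.mul_sum]
  refine Finset.sum_congr rfl fun i _ => ?_
  set e := EuclideanSpace.single i (1:ℝ) with he
  have hG : Differentiable ℝ (fun z => fderiv ℝ F z e) :=
    (hF'.differentiable (by simp)).clm_apply (differentiable_const e)
  have hinner : (fun y => fderiv ℝ (fun z => F (c • z)) y e)
      = fun y => c * (fun z => fderiv ℝ F z e) (c • y) := by
    funext y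
    rw [my_fderiv_comp_smul F c y (hFd _)]
    simp
  rw [hinner]
  have hGc : DifferentiableAt ℝ (fun y : EuclideanSpace ℝ (Fin n)
      => (fun z => fderiv ℝ F z e) (c • y)) x :=
    (hG (c • x)).comp x (differentiable_id.const_smul c).differentiableAt
  rw [fderiv_const_mul hGc c, my_fderiv_comp_smul _ c x (hG _)]
  simp
  ring

end Aux

/-- the averaged strong energy condition in flat spacetime:
if ∫ ρ f² ≥ −φ_max² ∫ [c₁|Δ(f²)| + c₂|∇f|²] for all test functions f, then
liminf_{λ→∞} ∫ ρ f_λ² ≥ 0. -/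
theorem stmt_19 (n : ℕ) (hn : 1 ≤ n) (c₁ c₂ φmax : ℝ)
    (hc₁ : 0 ≤ c₁) (hc₂ : 0 ≤ c₂) (hφmax : 0 ≤ φmax)
    (ρ : EuclideanSpace ℝ (Fin n) → ℝ) (hρ : LocallyIntegrable ρ)
    (hbound : ∀ f : EuclideanSpace ℝ (Fin n) → ℝ,
      ContDiff ℝ (⊤ : ℕ∞) f → HasCompactSupport f →
      ∫ x, ρ x * f x ^ 2 ≥
        -φmax ^ 2 * ∫ x, (c₁ * |lap (fun y => f y ^ 2) x| + c₂ * ‖fderiv ℝ f x‖ ^ 2))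
    (f : EuclideanSpace ℝ (Fin n) → ℝ)
    (hf : ContDiff ℝ (⊤ : ℕ∞) f) (hfc : HasCompactSupport f)
    (hnorm : ∫ x, f x ^ 2 = 1) :
    liminf (fun lam : ℝ =>
        ∫ x, ρ x * (lam ^ (-(n : ℝ) / 2) * f (lam⁻¹ • x)) ^ 2) atTop ≥ 0 := by
  set v : ℝ → ℝ := fun lam =>
    ∫ x, ρ x * (lam ^ (-(n : ℝ) / 2) * f (lam⁻¹ • x)) ^ 2 with hv
  set K : ℝ := ∫ x, (c₁ * |lap (fun y => f y ^ 2) x| + c₂ * ‖fderiv ℝ f x‖ ^ 2) with hK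
  set u : ℝ → ℝ := fun lam => (-(φmax ^ 2 * K)) * (lam ^ 2)⁻¹ with hu
  -- the eventual lower bound
  have hlow : ∀ᶠ lam in atTop, u lam ≤ v lam := by
    filter_upwards [eventually_ge_atTop (1:ℝ)] with lam hlam
    have hlam0 : (0:ℝ) < lam := lt_of_lt_of_le one_pos hlam
    set a : ℝ := lam ^ (-(n : ℝ) / 2) with ha
    set c : ℝ := lam⁻¹ with hc
    have hc0 : c ≠ 0 := inv_ne_zero hlam0.ne'
    set g : EuclideanSpace ℝ (Fin n) → ℝ := fun x => a * f (c • x) with hg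
    have hsm : ContDiff ℝ (⊤ : ℕ∞) (fun y : EuclideanSpace ℝ (Fin n) => c • y) :=
      contDiff_id.const_smul c
    have hgcd : ContDiff ℝ (⊤ : ℕ∞) g := contDiff_const.mul (hf.comp hsm)
    have hgsupp : HasCompactSupport g := by
      have h1 : HasCompactSupport (fun x : EuclideanSpace ℝ (Fin n) => f (c • x)) :=
        hfc.comp_smul hc0
      exact h1.mul_left
    have hb := hbound g hgcd hgsupp
    -- compute the right-hand side integral
    have hF2 : ContDiff ℝ (⊤ : ℕ∞) (fun z => f z ^ 2) := hf.pow 2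
    have hF2c : ContDiff ℝ (⊤ : ℕ∞) (fun y => (fun z => f z ^ 2) (c • y)) := hF2.comp hsm
    have hpoint : ∀ x, c₁ * |lap (fun y => g y ^ 2) x| + c₂ * ‖fderiv ℝ g x‖ ^ 2
        = (a ^ 2 * c ^ 2) * ((fun z => c₁ * |lap (fun y => f y ^ 2) z|
            + c₂ * ‖fderiv ℝ f z‖ ^ 2) (c • x)) := by
      intro x
      have hlapg : lap (fun y => g y ^ 2) x
          = a ^ 2 * (c ^ 2 * lap (fun z => f z ^ 2) (c • x)) := by
        have hsq : (fun y => g y ^ 2)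
            = fun y => a ^ 2 * ((fun z => f z ^ 2) (c • y)) := by
          funext y
          simp [hg, mul_pow]
        rw [hsq, my_lap_const_mul _ hF2c, my_lap_comp_smul _ hF2]
      have hfg : fderiv ℝ g x = a • c • fderiv ℝ f (c • x) := by
        have hd : DifferentiableAt ℝ (fun y : EuclideanSpace ℝ (Fin n) => f (c • y)) x :=
          ((hf.differentiable (by simp)) (c • x)).comp x
            (differentiable_id.const_smul c).differentiableAt
        rw [hg]
        rw [fderiv_const_mul hd a, my_fderiv_comp_smul f c x ((hf.differentiable (by simp)) _)]
      rw [hlapg, hfg, norm_smul, norm_smul]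
      simp only [Real.norm_eq_abs, abs_mul, abs_of_nonneg (sq_nonneg a),
        abs_of_nonneg (sq_nonneg c), mul_pow, sq_abs]
      ring
    have hint : ∫ x, (c₁ * |lap (fun y => g y ^ 2) x| + c₂ * ‖fderiv ℝ g x‖ ^ 2)
        = (lam ^ 2)⁻¹ * K := by
      have h1 : ∫ x, (c₁ * |lap (fun y => g y ^ 2) x| + c₂ * ‖fderiv ℝ g x‖ ^ 2)
          = ∫ x, (a ^ 2 * c ^ 2) * ((fun z => c₁ * |lap (fun y => f y ^ 2) z|
              + c₂ * ‖fderiv ℝ f z‖ ^ 2) (c • x)) := by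
        congr 1
        funext x
        exact hpoint x
      rw [h1, integral_const_mul]
      have h2 : ∫ x, (fun z => c₁ * |lap (fun y => f y ^ 2) z|
          + c₂ * ‖fderiv ℝ f z‖ ^ 2) (c • x)
          = |lam ^ (Module.finrank ℝ (EuclideanSpace ℝ (Fin n)))| • K := by
        rw [hc]
        exact Measure.integral_comp_inv_smul volume
          (fun z => c₁ * |lap (fun y => f y ^ 2) z| + c₂ * ‖fderiv ℝ f z‖ ^ 2) lam
      rw [h2, finrank_euclideanSpace_fin, abs_of_nonneg (pow_nonneg hlam0.le n),
        smul_eq_mul]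
      have ha2 : a ^ 2 = (lam ^ n)⁻¹ := by
        rw [ha, ← Real.rpow_natCast (lam ^ (-(n : ℝ) / 2)) 2, ← Real.rpow_mul hlam0.le,
          ← Real.rpow_natCast lam n, ← Real.rpow_neg hlam0.le]
        norm_num
      rw [ha2, hc]
      have hln : (lam : ℝ) ^ n ≠ 0 := pow_ne_zero n hlam0.ne'
      field_simp
    show u lam ≤ ∫ x, ρ x * g x ^ 2
    calc u lam = -φmax ^ 2 * ((lam ^ 2)⁻¹ * K) := by rw [hu]; ring
    _ = -φmax ^ 2 * ∫ x, (c₁ * |lap (fun y => g y ^ 2) x| + c₂ * ‖fderiv ℝ g x‖ ^ 2) := by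
        rw [hint]
    _ ≤ ∫ x, ρ x * g x ^ 2 := hb
  -- the lower bound tends to 0
  have htend : Tendsto u atTop (nhds 0) := by
    have h1 : Tendsto (fun lam : ℝ => (lam ^ 2)⁻¹) atTop (nhds 0) := by
      have h0 : Tendsto (fun x : ℝ => x ^ 2) atTop atTop :=
        tendsto_pow_atTop two_ne_zero
      have := h0.inv_tendsto_atTop
      exact this
    have h2 := h1.const_mul (-(φmax ^ 2 * K))
    rw [mul_zero] at h2
    refine h2.congr fun k => ?_
    rw [hu]
  by_cases hco : IsCoboundedUnder (· ≥ ·) atTop v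
  · have h0 : (0:ℝ) = liminf u atTop := (htend.liminf_eq).symm
    rw [ge_iff_le, h0]
    exact liminf_le_liminf hlow htend.isBoundedUnder_ge hco
  · have hnb : ¬ BddAbove {a : ℝ | ∀ᶠ t in atTop, a ≤ v t} := by
      intro hb
      obtain ⟨b, hbmem⟩ := hb
      exact hco ⟨b, fun a ha => hbmem (by simpa [eventually_map] using ha)⟩
    rw [ge_iff_le, liminf_eq, Real.sSup_of_not_bddAbove hnb]
end
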